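/- arXiv:2203.13133 — 2 statements merged into one kernel-verified Lean document; each statement's English description precedes it below -/
import Mathlib

section
/- Let λ > 0, A invertible, and define u(b̂,d̂) = (λ A* A + P* P)⁻¹ (λ A*(b + b̂) + P*(d + d̂)). If the sequences b̂^k, d̂^k defined by b̂^{k+1} = b̂^k + b − A u^k, d̂^{k+1} = d̂^k + d − P u^k (with u^k = u(b̂^k, d̂^k)) converge to limits b̂^∞, d̂^∞, then the limit wavefield u^∞ = u(b̂^∞, d̂^∞) satisfies A u^∞ = b and P u^∞ = d exactly. -/
open Matrix Filter Topology

/-! A fixed point of the dual update `x ↦ x + c - y` forces `y = c`: the limit dual variables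
are unchanged by one more update, and the wavefield depends continuously on them. -/

theorem eq_of_tendsto_of_add_sub {G : Type*} [AddCommGroup G] [TopologicalSpace G]
    [IsTopologicalAddGroup G] [T2Space G] {x y : ℕ → G} {c xlim ylim : G}
    (hstep : ∀ k, x (k + 1) = x k + c - y k)
    (hx : Tendsto x atTop (𝓝 xlim)) (hy : Tendsto y atTop (𝓝 ylim)) : ylim = c := by
  have hy_eq : y = fun k => x k + c - x (k + 1) := by
    funext k
    rw [hstep k]
    abel
  have hlim : Tendsto y atTop (𝓝 (xlim + c - xlim)) := by
    rw [hy_eq]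
    exact (hx.add_const c).sub (hx.comp (tendsto_add_atTop_nat 1))
  simpa using tendsto_nhds_unique hy hlim

theorem fixed_model_dual_convergence_general {n r : ℕ} (l : ℝ)
    (A : Matrix (Fin n) (Fin n) ℂ)
    (P : Matrix (Fin r) (Fin n) ℂ) (b : Fin n → ℂ) (d : Fin r → ℂ)
    (bhat : ℕ → Fin n → ℂ) (dhat : ℕ → Fin r → ℂ)
    (binf : Fin n → ℂ) (dinf : Fin r → ℂ)
    (uIter : (Fin n → ℂ) → (Fin r → ℂ) → Fin n → ℂ)
    (huIter : ∀ bh dh, uIter bh dh =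
      ((l : ℂ) • (Aᴴ * A) + Pᴴ * P)⁻¹ *ᵥ
        ((l : ℂ) • (Aᴴ *ᵥ (b + bh)) + Pᴴ *ᵥ (d + dh)))
    (hb : ∀ k, bhat (k + 1) = bhat k + b - A *ᵥ uIter (bhat k) (dhat k))
    (hd : ∀ k, dhat (k + 1) = dhat k + d - P *ᵥ uIter (bhat k) (dhat k))
    (hbl : Tendsto bhat atTop (𝓝 binf))
    (hdl : Tendsto dhat atTop (𝓝 dinf)) :
    A *ᵥ uIter binf dinf = b ∧ P *ᵥ uIter binf dinf = d := by
  have hcont : Continuous fun p : (Fin n → ℂ) × (Fin r → ℂ) => uIter p.1 p.2 := by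
    simp only [huIter]
    fun_prop
  have hu : Tendsto (fun k => uIter (bhat k) (dhat k)) atTop (𝓝 (uIter binf dinf)) :=
    (hcont.tendsto (binf, dinf)).comp (hbl.prodMk_nhds hdl)
  have hmulVec {m : ℕ} (M : Matrix (Fin m) (Fin n) ℂ) :
      Tendsto (fun k => M *ᵥ uIter (bhat k) (dhat k)) atTop (𝓝 (M *ᵥ uIter binf dinf)) :=
    ((continuous_const.matrix_mulVec continuous_id).tendsto _).comp hu
  exact ⟨eq_of_tendsto_of_add_sub hb hbl (hmulVec A),
    eq_of_tendsto_of_add_sub hd hdl (hmulVec P)⟩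

/-- IR-WRI with fixed model: if the scaled dual sequences converge, the limit
wavefield satisfies both the wave equation and the data equation exactly. -/
theorem fixed_model_dual_convergence {n r : ℕ} (l : ℝ) (hl : 0 < l)
    (A : Matrix (Fin n) (Fin n) ℂ) (hA : IsUnit A.det)
    (P : Matrix (Fin r) (Fin n) ℂ) (b : Fin n → ℂ) (d : Fin r → ℂ)
    (bhat : ℕ → Fin n → ℂ) (dhat : ℕ → Fin r → ℂ)
    (binf : Fin n → ℂ) (dinf : Fin r → ℂ)
    (uIter : (Fin n → ℂ) → (Fin r → ℂ) → Fin n → ℂ)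
    (huIter : ∀ bh dh, uIter bh dh =
      ((l : ℂ) • (Aᴴ * A) + Pᴴ * P)⁻¹ *ᵥ
        ((l : ℂ) • (Aᴴ *ᵥ (b + bh)) + Pᴴ *ᵥ (d + dh)))
    (hb : ∀ k, bhat (k + 1) = bhat k + b - A *ᵥ uIter (bhat k) (dhat k))
    (hd : ∀ k, dhat (k + 1) = dhat k + d - P *ᵥ uIter (bhat k) (dhat k))
    (hbl : Tendsto bhat atTop (𝓝 binf))
    (hdl : Tendsto dhat atTop (𝓝 dinf)) :
    A *ᵥ uIter binf dinf = b ∧ P *ᵥ uIter binf dinf = d :=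
  fixed_model_dual_convergence_general l A P b d bhat dhat binf dinf uIter huIter hb hd hbl hdl
end

section
/- With A = [A₁ A₂] invertible and b ∈ ℂⁿ, let u = A⁻¹ b with blocks u₁, u₂, and let ũ₁ be an approximation of u₁. Define ũ₂ = (A₂*A₂)⁻¹ A₂*(b − A₁ ũ₁). Then ‖ũ₂ − u₂‖ ≤ ‖(A₂*A₂)⁻¹ A₂* A₁‖_op · ‖ũ₁ − u₁‖, so the error in the localized wavefield is controlled linearly by the error in the exterior wavefield. -/
/-!
Since `b = A₁ u₁ + A₂ u₂` and `(A₂*A₂)⁻¹A₂*` is a left inverse of `A₂` (the columns of the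
invertible `A` are independent, so `A₂*A₂` is positive definite), applying it to
`b − A₁ũ₁ = A₁(u₁ − ũ₁) + A₂u₂` gives `ũ₂ − u₂ = (A₂*A₂)⁻¹A₂*A₁ (u₁ − ũ₁)`; the bound is then the
definition of the operator norm.
-/

open Matrix

namespace Matrix

variable {m n k ι : Type*} [Fintype n] [Fintype k] [Fintype ι]

lemma mulVec_eq_add_mulVec_mem_notMem {R : Type*} [NonUnitalNonAssocSemiring R]
    [DecidableEq n] (A : Matrix m n R) (S : Finset n) (u : n → R) :
    A *ᵥ u = A.submatrix id (Subtype.val : {j // j ∈ S} → n) *ᵥ (fun j => u j) +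
      A.submatrix id (Subtype.val : {j // j ∉ S} → n) *ᵥ (fun j => u j) := by
  funext i
  change ∑ j, A i j * u j = ∑ j : {j // j ∈ S}, A i j * u j + ∑ j : {j // j ∉ S}, A i j * u j
  rw [← Finset.sum_add_sum_compl S, Finset.sum_subtype S (fun _ => Iff.rfl),
    Finset.sum_subtype Sᶜ (fun _ => Finset.mem_compl)]

lemma mulVec_submatrix_injective_of_isUnit {R : Type*} [CommRing R] [DecidableEq n]
    {A : Matrix n n R} (hA : IsUnit A) {e : ι → n} (he : Function.Injective e) :
    Function.Injective (A.submatrix id e).mulVec := by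
  rw [mulVec_injective_iff]
  exact (linearIndependent_cols_of_isUnit hA).comp e he

open scoped ComplexOrder in
lemma inv_conjTranspose_mul_self_mul_conjTranspose_mul_self {𝕜 : Type*} [RCLike 𝕜]
    [Fintype m] [DecidableEq n] {A : Matrix m n 𝕜} (hA : Function.Injective A.mulVec) :
    (Aᴴ * A)⁻¹ * Aᴴ * A = 1 := by
  rw [Matrix.mul_assoc]
  exact nonsing_inv_mul _ ((isUnit_iff_isUnit_det _).mp (PosDef.conjTranspose_mul_self A hA).isUnit)

lemma mulVec_add_mulVec_sub_mulVec_sub_eq_of_mul_eq_one {R : Type*} [CommRing R] [Fintype m]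
    [DecidableEq k] {L : Matrix k m R} {A₁ : Matrix m ι R} {A₂ : Matrix m k R}
    (hL : L * A₂ = 1) (x z : ι → R) (y : k → R) :
    L *ᵥ (A₁ *ᵥ x + A₂ *ᵥ y - A₁ *ᵥ z) - y = (L * A₁) *ᵥ (x - z) := by
  rw [add_sub_right_comm, ← mulVec_sub, mulVec_add, mulVec_mulVec, mulVec_mulVec, hL,
    one_mulVec, add_sub_cancel_right]

lemma sqrt_sum_norm_mulVec_sq_le {𝕜 : Type*} [RCLike 𝕜] [Fintype m] [DecidableEq n]
    (B : Matrix m n 𝕜) (x : n → 𝕜) :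
    √(∑ i, ‖(B *ᵥ x) i‖ ^ 2) ≤
      ‖LinearMap.toContinuousLinearMap (toEuclideanLin B)‖ * √(∑ j, ‖x j‖ ^ 2) := by
  simpa only [EuclideanSpace.norm_eq, LinearMap.coe_toContinuousLinearMap', toLpLin_toLp,
    toLin'_apply, WithLp.ofLp_toLp] using
    (LinearMap.toContinuousLinearMap (toEuclideanLin B)).le_opNorm (WithLp.toLp 2 x)

end Matrix

/-- Error propagation of the localized wavefield update: with `u = A⁻¹b` and
`ut₂ = (A₂*A₂)⁻¹A₂*(b − A₁ut₁)`, the error satisfies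
`‖ut₂ − u₂‖ ≤ ‖(A₂*A₂)⁻¹A₂*A₁‖_op · ‖ut₁ − u₁‖`. -/
theorem localized_error_bound {n : ℕ} (A : Matrix (Fin n) (Fin n) ℂ)
    (hA : IsUnit A.det) (S : Finset (Fin n)) (b : Fin n → ℂ)
    (ut₁ : {i : Fin n // i ∈ S} → ℂ) :
    let A₁ : Matrix (Fin n) {i : Fin n // i ∈ S} ℂ := Matrix.of fun i j => A i j.val
    let A₂ : Matrix (Fin n) {i : Fin n // i ∉ S} ℂ := Matrix.of fun i j => A i j.val
    let u : Fin n → ℂ := A⁻¹ *ᵥ b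
    let u₁ : {i : Fin n // i ∈ S} → ℂ := fun j => u j.val
    let u₂ : {i : Fin n // i ∉ S} → ℂ := fun j => u j.val
    let ut₂ : {i : Fin n // i ∉ S} → ℂ := (A₂ᴴ * A₂)⁻¹ *ᵥ (A₂ᴴ *ᵥ (b - A₁ *ᵥ ut₁))
    let B : Matrix {i : Fin n // i ∉ S} {i : Fin n // i ∈ S} ℂ := (A₂ᴴ * A₂)⁻¹ * A₂ᴴ * A₁
    Real.sqrt (∑ i, ‖(ut₂ - u₂) i‖^2) ≤
      ‖LinearMap.toContinuousLinearMap (Matrix.toEuclideanLin B)‖ *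
        Real.sqrt (∑ i, ‖(ut₁ - u₁) i‖^2) := by
  intro A₁ A₂ u u₁ u₂ ut₂ B
  have hA₂ : Function.Injective A₂.mulVec :=
    mulVec_submatrix_injective_of_isUnit ((isUnit_iff_isUnit_det A).mpr hA) Subtype.val_injective
  have hb : b = A₁ *ᵥ u₁ + A₂ *ᵥ u₂ := by
    have hu : A *ᵥ u = b := by rw [mulVec_mulVec, mul_nonsing_inv A hA, one_mulVec]
    exact hu.symm.trans (mulVec_eq_add_mulVec_mem_notMem A S u)
  have herror : ut₂ - u₂ = B *ᵥ (u₁ - ut₁) := by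
    rw [← mulVec_add_mulVec_sub_mulVec_sub_eq_of_mul_eq_one
      (inv_conjTranspose_mul_self_mul_conjTranspose_mul_self hA₂), ← hb, ← mulVec_mulVec]
  calc √(∑ i, ‖(ut₂ - u₂) i‖ ^ 2) = √(∑ i, ‖(B *ᵥ (u₁ - ut₁)) i‖ ^ 2) := by rw [herror]
    _ ≤ ‖LinearMap.toContinuousLinearMap (toEuclideanLin B)‖ * √(∑ i, ‖(u₁ - ut₁) i‖ ^ 2) :=
      sqrt_sum_norm_mulVec_sq_le B _
    _ = _ := by simp only [Pi.sub_apply, norm_sub_rev]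
end
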